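/- Let Z be a real Banach space with a Schauder basis (e_n): every z ∈ Z has a unique representation z = Σ_n a_n e_n (convergence of the partial sums in norm). Assume (e_n) is c_u-unconditional for some c_u ≥ 1, i.e. ‖Σ_n θ_n a_n e_n‖ ≤ c_u ‖Σ_n a_n e_n‖ for all signs θ_n ∈ {−1, 1} and all z = Σ_n a_n e_n ∈ Z. A block basis of (e_n) is a sequence y_n = Σ_{i∈I_n} b_i e_i of nonzero vectors where I₁ < I₂ < ⋯ are finite subsets of ℕ (max I_n < min I_{n+1}); it is normalized if ‖y_n‖ = 1 for all n. Assume there is c_d > 0 such that every normalized block basis (y_n) of (e_n) c_d-dominates (e_n): c_d ‖Σ α_i y_i‖ ≥ ‖Σ α_i e_i‖ for all finitely supported real scalars (α_i). Then for every normalized block basis (y_n) of (e_n) which is equivalent to (e_n) (there is c ≥ 1 with (1/c)‖Σ α_i e_i‖ ≤ ‖Σ α_i y_i‖ ≤ c‖Σ α_i e_i‖ for all finitely supported (α_i)), the closed linear span of (y_n) is complemented in Z, i.e. it is the range of a bounded linear projection on Z. -/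

import Mathlib

/-!
With `P_A` the basis projection onto the coordinates in `A` and `gₙ` a norm-one functional with
`gₙ yₙ = 1`, the projection is `P z = ∑ₙ gₙ(P_{Iₙ} z) yₙ`. Put `rₙ = ‖P_{Iₙ} z‖`; the vectors
`uₙ = P_{Iₙ} z / rₙ` form another normalized block basis. For a finite set `F` of indices,
equivalence, unconditionality (`|gₙ(P_{Iₙ} z)| ≤ rₙ`, so the coefficients are convex combinations
of `±rₙ`) and domination by `(uₙ)` give
`‖∑_F gₙ(P_{Iₙ} z) yₙ‖ ≤ c ‖∑_F gₙ(P_{Iₙ} z) eₙ‖ ≤ c c_u ‖∑_F rₙ eₙ‖ ≤ c c_u c_d ‖∑_F rₙ uₙ‖`,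
and the last sum is `P_{⋃_F Iₙ} z`. Unconditionality bounds every `P_A` uniformly (in particular
the coordinate functionals are continuous), so the partial sums of `P z` are uniformly bounded
and, as they only see the tail of `z`, Cauchy. Their limit fixes each `yₙ` and lands in the
closed span of the `yₙ`.
-/

open Filter Topology

def FLt (A B : Finset ℕ) : Prop := ∀ a ∈ A, ∀ b ∈ B, a < b

def IsNormalizedBlockBasis {Z : Type*} [NormedAddCommGroup Z] [Module ℝ Z]
    (e y : ℕ → Z) : Prop :=
  (∀ n, y n ≠ 0) ∧ (∀ n, ‖y n‖ = 1) ∧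
    ∃ I : ℕ → Finset ℕ, (∀ m n : ℕ, m < n → FLt (I m) (I n)) ∧
      ∃ b : ℕ → ℝ, ∀ n, y n = ∑ i ∈ I n, b i • e i

section

variable {Z : Type*} [NormedAddCommGroup Z] [NormedSpace ℝ Z]

theorem norm_sum_smul_le_of_abs_le {ι : Type*} (v : ι → Z) (S : Finset ι) (r t : ι → ℝ) (C : ℝ)
    (hvert : ∀ s : ι → ℝ, (∀ i ∈ S, |s i| = r i) → ‖∑ i ∈ S, s i • v i‖ ≤ C)
    (ht : ∀ i ∈ S, |t i| ≤ r i) : ‖∑ i ∈ S, t i • v i‖ ≤ C := by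
  classical
  let φ : (S → ℝ) → ℝ := fun x => ‖∑ i : S, x i • v i‖
  have hφ : ConvexOn ℝ Set.univ φ :=
    convexOn_univ_norm.comp_linearMap (Fintype.linearCombination ℝ fun i : S => v i)
  have hcube : (fun i : S => t i) ∈ convexHull ℝ (Set.univ.pi fun i : S => {-r i, r i}) := by
    rw [convexHull_pi]
    intro i _
    have hi := abs_le.1 (ht i i.2)
    simp only [convexHull_pair, segment_eq_Icc (by linarith : -r i ≤ r i)]
    exact hi
  obtain ⟨s, hs, hle⟩ := hφ.exists_ge_of_mem_convexHull (Set.subset_univ _) hcube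
  let s' : ι → ℝ := fun i => if h : i ∈ S then s ⟨i, h⟩ else 0
  calc ‖∑ i ∈ S, t i • v i‖ = φ fun i => t i := by rw [← S.sum_coe_sort]
    _ ≤ φ s := hle
    _ = ‖∑ i ∈ S, s' i • v i‖ := by
      rw [← S.sum_coe_sort]; simp [φ, s']
    _ ≤ C := hvert s' fun i hi => by
      have hr : 0 ≤ r i := (abs_nonneg _).trans (ht i hi)
      rcases hs ⟨i, hi⟩ trivial with h | h <;>
        simp only [Set.mem_singleton_iff] at h <;> simp [s', hi, h, abs_of_nonneg hr]

theorem Finsupp.sum_finsetSum_single_smul (F : Finset ℕ) (a : ℕ → ℝ) (v : ℕ → Z) :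
    ((∑ n ∈ F, Finsupp.single n (a n)).sum fun i t => t • v i) = ∑ n ∈ F, a n • v n := by
  simp [← Finsupp.linearCombination_apply]

theorem exists_projection_onto_closure_span_of_cauchySeq [CompleteSpace Z]
    (T : ℕ → Z →L[ℝ] Z) (s : Set Z)
    (hconv : ∀ z, CauchySeq fun N => T N z)
    (hmaps : ∀ N z, T N z ∈ Submodule.span ℝ s)
    (hfix : ∀ x ∈ s, Tendsto (fun N => T N x) atTop (𝓝 x)) :
    ∃ P : Z →L[ℝ] Z, (∀ z, P (P z) = P z) ∧
      LinearMap.range (P : Z →ₗ[ℝ] Z) = (Submodule.span ℝ s).topologicalClosure := by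
  choose Pz hPz using fun z => cauchySeq_tendsto_of_complete (hconv z)
  let P : Z →L[ℝ] Z := continuousLinearMapOfTendsto T (tendsto_pi_nhds.2 hPz)
  have hP : ∀ z, Tendsto (fun N => T N z) atTop (𝓝 (P z)) := hPz
  have hmem : ∀ z, P z ∈ (Submodule.span ℝ s).topologicalClosure := fun z =>
    (Submodule.isClosed_topologicalClosure _).mem_of_tendsto (hP z)
      (Eventually.of_forall fun N => Submodule.le_topologicalClosure _ (hmaps N z))
  have hid : ∀ v ∈ (Submodule.span ℝ s).topologicalClosure, P v = v := fun v hv =>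
    ContinuousLinearMap.eqOn_closure_span (g := ContinuousLinearMap.id ℝ Z)
      (fun x hx => tendsto_nhds_unique (hP x) (hfix x hx))
      (by rwa [← Submodule.topologicalClosure_coe])
  exact ⟨P, fun z => hid _ (hmem z),
    le_antisymm (by rintro _ ⟨z, rfl⟩; exact hmem z) fun v hv => ⟨v, hid v hv⟩⟩

def HasExpansion (e : ℕ → Z) (a : ℕ → ℝ) (z : Z) : Prop :=
  Tendsto (fun n => ∑ i ∈ Finset.range n, a i • e i) atTop (𝓝 z)

namespace HasExpansion

variable {e : ℕ → Z} {a a' : ℕ → ℝ} {z z' : Z}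

theorem unique (h : HasExpansion e a z) (h' : HasExpansion e a z') : z = z' :=
  tendsto_nhds_unique h h'

theorem add (h : HasExpansion e a z) (h' : HasExpansion e a' z') :
    HasExpansion e (a + a') (z + z') := by
  simpa only [HasExpansion, Pi.add_apply, add_smul, Finset.sum_add_distrib] using
    Tendsto.add h h'

theorem const_smul (h : HasExpansion e a z) (r : ℝ) : HasExpansion e (r • a) (r • z) := by
  simpa only [HasExpansion, Pi.smul_apply, smul_eq_mul, mul_smul, Finset.smul_sum] using
    Tendsto.const_smul h r

end HasExpansion

theorem hasExpansion_indicator (e : ℕ → Z) (S : Finset ℕ) (a : ℕ → ℝ) :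
    HasExpansion e ((S : Set ℕ).indicator a) (∑ i ∈ S, a i • e i) := by
  have h : ∑ i ∈ S, a i • e i = ∑ i ∈ S, (S : Set ℕ).indicator a i • e i :=
    Finset.sum_congr rfl fun i hi => by rw [Set.indicator_of_mem (Finset.mem_coe.2 hi)]
  rw [h]
  exact (hasSum_sum_of_ne_finset_zero fun i hi => by simp [hi]).tendsto_sum_nat

section Coefficients

variable {e : ℕ → Z} (hbasis : ∀ z, ∃! a, HasExpansion e a z)
include hbasis

noncomputable def basisCoeffs : Z →ₗ[ℝ] ℕ → ℝ where
  toFun z := (hbasis z).exists.choose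
  map_add' z z' := (hbasis _).unique (hbasis _).exists.choose_spec
    ((hbasis z).exists.choose_spec.add (hbasis z').exists.choose_spec)
  map_smul' r z := (hbasis _).unique (hbasis _).exists.choose_spec
    ((hbasis z).exists.choose_spec.const_smul r)

theorem hasExpansion_basisCoeffs (z : Z) : HasExpansion e (basisCoeffs hbasis z) z :=
  (hbasis z).exists.choose_spec

theorem basisCoeffs_eq {a : ℕ → ℝ} {z : Z} (h : HasExpansion e a z) :
    basisCoeffs hbasis z = a :=
  (hbasis z).unique (hasExpansion_basisCoeffs hbasis z) h

theorem basisCoeffs_basis (j : ℕ) : basisCoeffs hbasis (e j) = Pi.single j 1 := by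
  have h := hasExpansion_indicator e {j} 1
  rw [Finset.sum_singleton, Pi.one_apply, one_smul] at h
  rw [basisCoeffs_eq hbasis h]
  ext i
  by_cases hij : i = j <;> simp [hij]

theorem basis_ne_zero_of_existsUnique_hasExpansion (i : ℕ) : e i ≠ 0 := fun h0 => by
  have h := congrFun (basisCoeffs_basis hbasis i) i
  rw [h0, map_zero] at h
  simp at h

end Coefficients

def SignUnconditional (e : ℕ → Z) (cu : ℝ) : Prop :=
  ∀ (z : Z) (a θ : ℕ → ℝ), (∀ n, θ n = 1 ∨ θ n = -1) → HasExpansion e a z →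
    ∃ w, HasExpansion e (fun i => θ i * a i) w ∧ ‖w‖ ≤ cu * ‖z‖

namespace SignUnconditional

variable {e : ℕ → Z} {cu : ℝ} (hu : SignUnconditional e cu)
include hu

/-- Flipping the signs off `A` and averaging with `z` keeps exactly the terms indexed by `A`. -/
theorem norm_sum_le (A : Finset ℕ) {a : ℕ → ℝ} {z : Z} (h : HasExpansion e a z) :
    ‖∑ i ∈ A, a i • e i‖ ≤ (1 + cu) / 2 * ‖z‖ := by
  classical
  obtain ⟨w, hw, hwz⟩ := hu z a (fun i => if i ∈ A then 1 else -1)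
    (fun i => by by_cases hi : i ∈ A <;> simp [hi]) h
  have hmid : HasExpansion e ((A : Set ℕ).indicator a) ((2 : ℝ)⁻¹ • (z + w)) := by
    convert (h.add hw).const_smul (2 : ℝ)⁻¹ using 1
    ext i
    by_cases hi : i ∈ A <;> simp [hi]; ring
  rw [(hasExpansion_indicator e A a).unique hmid, norm_smul, Real.norm_of_nonneg (by norm_num)]
  nlinarith [norm_add_le z w, norm_nonneg z]

theorem norm_sum_le_of_abs_eq (S : Finset ℕ) (s a : ℕ → ℝ) (hs : ∀ i ∈ S, |s i| = |a i|) :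
    ‖∑ i ∈ S, s i • e i‖ ≤ cu * ‖∑ i ∈ S, a i • e i‖ := by
  classical
  obtain ⟨w, hw, hwz⟩ := hu _ _ (fun i => if s i = a i then 1 else -1)
    (fun i => by by_cases hi : s i = a i <;> simp [hi]) (hasExpansion_indicator e S a)
  have hflip : (fun i => (if s i = a i then 1 else -1) * (S : Set ℕ).indicator a i)
      = (S : Set ℕ).indicator s := by
    ext i
    by_cases hi : i ∈ S
    · rw [Set.indicator_of_mem hi, Set.indicator_of_mem hi]
      by_cases h : s i = a i
      · rw [if_pos h, one_mul, h]
      · rw [if_neg h, (abs_eq_abs.1 (hs i hi)).resolve_left h, neg_one_mul]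
    · simp [hi]
  rw [hflip] at hw
  rwa [(hasExpansion_indicator e S s).unique hw]

theorem norm_basisCoeffs_le (hbasis : ∀ z, ∃! a, HasExpansion e a z) (i : ℕ) (z : Z) :
    ‖basisCoeffs hbasis z i‖ ≤ (1 + cu) / 2 / ‖e i‖ * ‖z‖ := by
  have hpos : 0 < ‖e i‖ := norm_pos_iff.2 (basis_ne_zero_of_existsUnique_hasExpansion hbasis i)
  have h := hu.norm_sum_le {i} (hasExpansion_basisCoeffs hbasis z)
  rw [Finset.sum_singleton, norm_smul] at h
  rw [div_mul_eq_mul_div, le_div_iff₀ hpos]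
  exact h

end SignUnconditional

namespace SchauderBasis

variable {e : ℕ → Z} {cu : ℝ}

noncomputable def ofSignUnconditional (hbasis : ∀ z, ∃! a, HasExpansion e a z)
    (hu : SignUnconditional e cu) : SchauderBasis ℝ Z where
  basis := e
  coord i := (LinearMap.proj i ∘ₗ basisCoeffs hbasis).mkContinuous _
    (hu.norm_basisCoeffs_le hbasis i)
  ortho i j := by
    change basisCoeffs hbasis (e j) i = _
    simp [basisCoeffs_basis, Pi.single_apply]
  expansion z := by
    simp only [HasSum, SummationFilter.conditional_filter_eq_map_range, tendsto_map'_iff]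
    exact hasExpansion_basisCoeffs hbasis z

theorem norm_proj_ofSignUnconditional_le (hbasis : ∀ z, ∃! a, HasExpansion e a z)
    (hu : SignUnconditional e cu) (A : Finset ℕ) (z : Z) :
    ‖GeneralSchauderBasis.proj (ofSignUnconditional hbasis hu) A z‖ ≤ (1 + cu) / 2 * ‖z‖ := by
  rw [GeneralSchauderBasis.proj_apply]
  exact hu.norm_sum_le A (hasExpansion_basisCoeffs hbasis z)

end SchauderBasis

theorem FLt.disjoint {A B : Finset ℕ} (h : FLt A B) : Disjoint A B :=
  Finset.disjoint_left.2 fun a ha hb => lt_irrefl a (h a ha a hb)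

section Blocks

variable {I : ℕ → Finset ℕ} (hI : ∀ m n, m < n → FLt (I m) (I n))
include hI

theorem pairwise_disjoint_of_forall_FLt : Pairwise fun m n => Disjoint (I m) (I n) := by
  intro m n hmn
  rcases hmn.lt_or_gt with h | h
  · exact (hI m n h).disjoint
  · exact (hI n m h).disjoint.symm

theorem le_of_mem_of_forall_FLt (hne : ∀ n, (I n).Nonempty) : ∀ n, ∀ i ∈ I n, n ≤ i := by
  intro n
  induction n with
  | zero => exact fun i _ => i.zero_le
  | succ m ih =>
    intro i hi
    obtain ⟨j, hj⟩ := hne m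
    exact (ih j hj).trans_lt (hI m (m + 1) m.lt_succ_self j hj i hi)

end Blocks

namespace GeneralSchauderBasis

variable {L : SummationFilter ℕ} (b : GeneralSchauderBasis ℕ ℝ Z L)

theorem proj_sum_smul_self (A : Finset ℕ) (a : ℕ → ℝ) :
    b.proj A (∑ i ∈ A, a i • b i) = ∑ i ∈ A, a i • b i := by
  simp only [map_sum, map_smul, proj_apply_basis_mem]
  exact Finset.sum_congr rfl fun i hi => by rw [if_pos hi]

theorem proj_proj_self (A : Finset ℕ) (x : Z) : b.proj A (b.proj A x) = b.proj A x := by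
  rw [proj_apply b A x, proj_sum_smul_self]

theorem proj_proj_of_disjoint {A B : Finset ℕ} (h : Disjoint A B) (x : Z) :
    b.proj A (b.proj B x) = 0 := by
  rw [proj_apply b B x, map_sum]
  refine Finset.sum_eq_zero fun j hj => ?_
  rw [map_smul, proj_apply_basis_mem, if_neg (Finset.disjoint_right.1 h hj), smul_zero]

theorem proj_biUnion {F : Finset ℕ} {I : ℕ → Finset ℕ} (hI : (F : Set ℕ).PairwiseDisjoint I)
    (x : Z) : b.proj (F.biUnion I) x = ∑ n ∈ F, b.proj (I n) x := by
  simp only [proj_apply]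
  exact Finset.sum_biUnion hI

variable {I : ℕ → Finset ℕ} (hI : ∀ m n, m < n → FLt (I m) (I n))
include hI

theorem isNormalizedBlockBasis_of_proj_eq_self {u : ℕ → Z} (hu : ∀ n, ‖u n‖ = 1)
    (hproj : ∀ n, b.proj (I n) (u n) = u n) : IsNormalizedBlockBasis b u := by
  classical
  refine ⟨fun n h => by simpa [h] using hu n, hu, I, hI,
    fun i => if h : ∃ n, i ∈ I n then b.coord i (u h.choose) else 0, fun n => ?_⟩
  conv_lhs => rw [← hproj n, proj_apply]
  refine Finset.sum_congr rfl fun i hi => ?_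
  have h : ∃ m, i ∈ I m := ⟨n, hi⟩
  have hn : h.choose = n := by
    by_contra hne
    exact Finset.disjoint_left.1 (pairwise_disjoint_of_forall_FLt hI hne) h.choose_spec hi
  dsimp only
  rw [dif_pos h, hn]

variable {y : ℕ → Z} (hyI : ∀ n, b.proj (I n) (y n) = y n)
include hyI

theorem sum_range_apply_proj_smul_of_lt (g : ℕ → StrongDual ℝ Z) (hgy : ∀ n, g n (y n) = 1)
    {m N : ℕ} (hm : m < N) : ∑ n ∈ Finset.range N, g n (b.proj (I n) (y m)) • y n = y m := by
  rw [Finset.sum_eq_single_of_mem m (Finset.mem_range.2 hm), hyI, hgy, one_smul]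
  intro n _ hnm
  rw [← hyI m, b.proj_proj_of_disjoint (pairwise_disjoint_of_forall_FLt hI hnm), map_zero,
    zero_smul]

variable (hy : ∀ n, ‖y n‖ = 1)
include hy

theorem exists_isNormalizedBlockBasis_smul_eq_proj (z : Z) :
    ∃ u, IsNormalizedBlockBasis b u ∧ ∀ n, ‖b.proj (I n) z‖ • u n = b.proj (I n) z := by
  classical
  refine ⟨fun n => if b.proj (I n) z = 0 then y n else ‖b.proj (I n) z‖⁻¹ • b.proj (I n) z,
    b.isNormalizedBlockBasis_of_proj_eq_self hI (fun n => ?_) (fun n => ?_), fun n => ?_⟩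
  · split_ifs with h
    · exact hy n
    · rw [norm_smul, norm_inv, norm_norm, inv_mul_cancel₀ (norm_ne_zero_iff.2 h)]
  · split_ifs with h
    · exact hyI n
    · rw [map_smul, proj_proj_self]
  · dsimp only
    split_ifs with h
    · rw [h, norm_zero, zero_smul]
    · rw [smul_smul, mul_inv_cancel₀ (norm_ne_zero_iff.2 h), one_smul]

theorem norm_sum_apply_proj_smul_le {c cu cd : ℝ} (hc : 0 ≤ c) (hcu : 0 ≤ cu)
    (hsign : ∀ (S : Finset ℕ) (s a : ℕ → ℝ), (∀ i ∈ S, |s i| = |a i|) →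
      ‖∑ i ∈ S, s i • b i‖ ≤ cu * ‖∑ i ∈ S, a i • b i‖)
    (hdom : ∀ u, IsNormalizedBlockBasis b u → ∀ (F : Finset ℕ) (a : ℕ → ℝ),
      ‖∑ n ∈ F, a n • b n‖ ≤ cd * ‖∑ n ∈ F, a n • u n‖)
    (hequiv : ∀ (F : Finset ℕ) (a : ℕ → ℝ), ‖∑ n ∈ F, a n • y n‖ ≤ c * ‖∑ n ∈ F, a n • b n‖)
    (g : ℕ → StrongDual ℝ Z) (hg : ∀ n, ‖g n‖ ≤ 1) (z : Z) (F : Finset ℕ) :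
    ‖∑ n ∈ F, g n (b.proj (I n) z) • y n‖ ≤ c * cu * cd * ‖b.proj (F.biUnion I) z‖ := by
  obtain ⟨u, hu, hru⟩ := b.exists_isNormalizedBlockBasis_smul_eq_proj hI hyI hy z
  have hmult : ‖∑ n ∈ F, g n (b.proj (I n) z) • b n‖
      ≤ cu * ‖∑ n ∈ F, ‖b.proj (I n) z‖ • b n‖ :=
    norm_sum_smul_le_of_abs_le _ F _ _ _
      (fun s hs => hsign F s _ fun n hn => by rw [hs n hn, abs_norm])
      (fun n _ => by
        simpa only [Real.norm_eq_abs, one_mul] using (g n).le_of_opNorm_le (hg n) _)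
  calc ‖∑ n ∈ F, g n (b.proj (I n) z) • y n‖
      ≤ c * ‖∑ n ∈ F, g n (b.proj (I n) z) • b n‖ := hequiv F _
    _ ≤ c * (cu * (cd * ‖∑ n ∈ F, ‖b.proj (I n) z‖ • u n‖)) := by
      gcongr
      exact hmult.trans (by gcongr; exact hdom u hu F _)
    _ = c * cu * cd * ‖b.proj (F.biUnion I) z‖ := by
      rw [b.proj_biUnion ((pairwise_disjoint_of_forall_FLt hI).set_pairwise _)]
      simp only [hru]
      ring

end GeneralSchauderBasis

theorem SchauderBasis.cauchySeq_sum_smul (b : SchauderBasis ℝ Z) (f : ℕ → StrongDual ℝ Z)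
    (y : ℕ → Z) (C : ℝ) (hbound : ∀ (F : Finset ℕ) (w : Z), ‖∑ n ∈ F, f n w • y n‖ ≤ C * ‖w‖)
    (hvanish : ∀ N n (x : Z), N ≤ n → f n (b.proj N x) = 0) (z : Z) :
    CauchySeq fun N => ∑ n ∈ Finset.range N, f n z • y n := by
  have htail : ∀ N m k, N ≤ m →
      ‖∑ n ∈ Finset.Ico m k, f n z • y n‖ ≤ C * ‖z - b.proj N z‖ := fun N m k hm =>
    calc ‖∑ n ∈ Finset.Ico m k, f n z • y n‖
        = ‖∑ n ∈ Finset.Ico m k, f n (z - b.proj N z) • y n‖ := by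
          congr 1
          refine Finset.sum_congr rfl fun n hn => ?_
          rw [map_sub, hvanish N n z (hm.trans (Finset.mem_Ico.1 hn).1), sub_zero]
      _ ≤ C * ‖z - b.proj N z‖ := hbound _ _
  refine cauchySeq_of_le_tendsto_0 (fun N => C * ‖z - b.proj N z‖) (fun m k N hm hk => ?_) ?_
  · rcases le_total m k with h | h
    · rw [dist_eq_norm', ← Finset.sum_Ico_eq_sub _ h]
      exact htail N m k hm
    · rw [dist_eq_norm, ← Finset.sum_Ico_eq_sub _ h]
      exact htail N k m hk
  · simpa using (((tendsto_const_nhds (x := z)).sub (b.tendsto_proj z)).norm).const_mul C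

theorem SchauderBasis.exists_projection_onto_closure_span_block [CompleteSpace Z]
    (b : SchauderBasis ℝ Z) {K c cu cd : ℝ}
    (hproj : ∀ (A : Finset ℕ) (z : Z), ‖GeneralSchauderBasis.proj b A z‖ ≤ K * ‖z‖)
    (hc : 0 ≤ c) (hcu : 0 ≤ cu) (hcd : 0 ≤ cd)
    (hsign : ∀ (S : Finset ℕ) (s a : ℕ → ℝ), (∀ i ∈ S, |s i| = |a i|) →
      ‖∑ i ∈ S, s i • b i‖ ≤ cu * ‖∑ i ∈ S, a i • b i‖)
    (hdom : ∀ u, IsNormalizedBlockBasis b u → ∀ (F : Finset ℕ) (a : ℕ → ℝ),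
      ‖∑ n ∈ F, a n • b n‖ ≤ cd * ‖∑ n ∈ F, a n • u n‖)
    {y : ℕ → Z} (hy : IsNormalizedBlockBasis b y)
    (hequiv : ∀ (F : Finset ℕ) (a : ℕ → ℝ), ‖∑ n ∈ F, a n • y n‖ ≤ c * ‖∑ n ∈ F, a n • b n‖) :
    ∃ P : Z →L[ℝ] Z, (∀ z, P (P z) = P z) ∧
      LinearMap.range (P : Z →ₗ[ℝ] Z) = (Submodule.span ℝ (Set.range y)).topologicalClosure := by
  obtain ⟨hy0, hy1, I, hI, β, hyβ⟩ := hy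
  have hyI : ∀ n, GeneralSchauderBasis.proj b (I n) (y n) = y n := fun n => by
    rw [hyβ n]
    exact b.proj_sum_smul_self _ _
  have hmin : ∀ n, ∀ i ∈ I n, n ≤ i := le_of_mem_of_forall_FLt hI fun n =>
    Finset.nonempty_iff_ne_empty.2 fun h => hy0 n (by rw [hyβ n, h, Finset.sum_empty])
  choose g hg hgy using fun n => exists_dual_vector ℝ (y n) (by rw [hy1 n]; exact one_ne_zero)
  let T : ℕ → Z →L[ℝ] Z := fun N =>
    ∑ n ∈ Finset.range N, (g n ∘L GeneralSchauderBasis.proj b (I n)).smulRight (y n)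
  have hT : ∀ N z,
      T N z = ∑ n ∈ Finset.range N, g n (GeneralSchauderBasis.proj b (I n) z) • y n :=
    fun N z => by simp [T]
  refine exists_projection_onto_closure_span_of_cauchySeq T (Set.range y) (fun z => ?_)
    (fun N z => ?_) ?_
  · simp only [hT]
    refine b.cauchySeq_sum_smul (fun n => g n ∘L GeneralSchauderBasis.proj b (I n)) y
      (c * cu * cd * K) (fun F w => ?_) (fun N n x hn => ?_) z
    · refine (b.norm_sum_apply_proj_smul_le hI hyI hy1 hc hcu hsign hdom hequiv g
        (fun n => (hg n).le) w F).trans ?_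
      rw [mul_assoc _ K]
      gcongr
      exact hproj _ _
    · have hdisj : Disjoint (I n) (Finset.range N) := Finset.disjoint_left.2 fun i hi hiN =>
        (Finset.mem_range.1 hiN).not_ge (hn.trans (hmin n i hi))
      exact (congrArg (g n) (b.proj_proj_of_disjoint hdisj x)).trans (map_zero _)
  · rw [hT]
    exact Submodule.sum_mem _ fun n _ => Submodule.smul_mem _ _ (Submodule.subset_span ⟨n, rfl⟩)
  · rintro _ ⟨m, rfl⟩
    refine tendsto_const_nhds.congr' ((eventually_gt_atTop m).mono fun N hN => ?_)
    dsimp only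
    rw [hT, b.sum_range_apply_proj_smul_of_lt hI hyI g (fun n => by simp [hgy, hy1]) hN]

end

theorem block_basis_span_complemented
    (Z : Type*) [NormedAddCommGroup Z] [NormedSpace ℝ Z] [CompleteSpace Z]
    (e : ℕ → Z)
    (hbasis : ∀ z : Z, ∃! a : ℕ → ℝ,
      Filter.Tendsto (fun n => ∑ i ∈ Finset.range n, a i • e i) Filter.atTop (nhds z))
    (cu : ℝ) (hcu : 1 ≤ cu)
    (huncond : ∀ (z : Z) (a θ : ℕ → ℝ), (∀ n, θ n = 1 ∨ θ n = -1) →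
      Filter.Tendsto (fun n => ∑ i ∈ Finset.range n, a i • e i) Filter.atTop (nhds z) →
      ∃ w : Z,
        Filter.Tendsto (fun n => ∑ i ∈ Finset.range n, (θ i * a i) • e i)
          Filter.atTop (nhds w) ∧ ‖w‖ ≤ cu * ‖z‖)
    (cd : ℝ) (hcd : 0 < cd)
    (hdom : ∀ u : ℕ → Z, IsNormalizedBlockBasis e u →
      ∀ α : ℕ →₀ ℝ, ‖α.sum fun i t => t • e i‖ ≤ cd * ‖α.sum fun i t => t • u i‖)
    (y : ℕ → Z) (hy : IsNormalizedBlockBasis e y)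
    (hequiv : ∃ c : ℝ, 1 ≤ c ∧ ∀ α : ℕ →₀ ℝ,
      (1 / c) * ‖α.sum fun i t => t • e i‖ ≤ ‖α.sum fun i t => t • y i‖ ∧
      ‖α.sum fun i t => t • y i‖ ≤ c * ‖α.sum fun i t => t • e i‖) :
    ∃ P : Z →L[ℝ] Z, (∀ z : Z, P (P z) = P z) ∧
      LinearMap.range (P : Z →ₗ[ℝ] Z) = (Submodule.span ℝ (Set.range y)).topologicalClosure := by
  obtain ⟨c, hc, hequiv⟩ := hequiv
  have hu : SignUnconditional e cu := huncond
  refine (SchauderBasis.ofSignUnconditional hbasis hu).exists_projection_onto_closure_span_block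
    (SchauderBasis.norm_proj_ofSignUnconditional_le hbasis hu) (by linarith) (by linarith) hcd.le
    hu.norm_sum_le_of_abs_eq (fun u hub F a => ?_) hy (fun F a => ?_)
  · have h := hdom u hub (∑ n ∈ F, Finsupp.single n (a n))
    rwa [Finsupp.sum_finsetSum_single_smul, Finsupp.sum_finsetSum_single_smul] at h
  · have h := (hequiv (∑ n ∈ F, Finsupp.single n (a n))).2
    rwa [Finsupp.sum_finsetSum_single_smul, Finsupp.sum_finsetSum_single_smul] at h
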